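/- arXiv:1509.03515 — 2 statements merged into one kernel-verified Lean document; each statement's English description precedes it below -/
import Mathlib

section
/- The geometric PNG map on triangular arrays is volume preserving in logarithmic variables: if H = (h_{ij})_{i+j-1≤n} = gPNG((w_{ij})_{i+j-1≤n}) with all entries positive, then the map (log w_{ij}) ↦ (log h_{ij}) has Jacobian determinant ±1. -/
/-- The geometric RSK local move `l_{ij}` acting on an array of positive reals
(1-based indexing).  For `i,j ≥ 2` it replaces the 2×2 submatrix
`(a b; c d)` with corners `(i-1,j-1)` and `(i,j)` by
`(bc/(a(b+c)), b; c, d(b+c))`; the boundary moves `l_{i1}`, `l_{1j}` multiply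
`x_{i1}` by `x_{i-1,1}` and `x_{1j}` by `x_{1,j-1}`, and `l_{11}` is the identity. -/
noncomputable def lmove (i j : ℕ) (X : ℕ → ℕ → ℝ) : ℕ → ℕ → ℝ :=
  if i = 1 ∧ j = 1 then X
  else if i = 1 then
    fun p q => if p = 1 ∧ q = j then X 1 (j - 1) * X 1 j else X p q
  else if j = 1 then
    fun p q => if p = i ∧ q = 1 then X (i - 1) 1 * X i 1 else X p q
  else
    fun p q =>
      if p = i - 1 ∧ q = j - 1 then
        X (i - 1) j * X i (j - 1) /
          (X (i - 1) (j - 1) * (X (i - 1) j + X i (j - 1)))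
      else if p = i ∧ q = j then X i j * (X (i - 1) j + X i (j - 1))
      else X p q

/-- `π^j_i = l_{ij} ∘ ⋯ ∘ l_{i1}`. -/
noncomputable def piMove (i j : ℕ) (X : ℕ → ℕ → ℝ) : ℕ → ℕ → ℝ :=
  (List.range j).foldl (fun Y k => lmove i (k + 1) Y) X

/-- `R_i = π^{m-i+1}_1 ∘ ⋯ ∘ π^m_i` (for `i ≤ m`), resp.
`R_i = π^1_{i-m+1} ∘ ⋯ ∘ π^m_i` (for `i ≥ m`): insertion of the `i`-th row of an
array with `m` columns. -/
noncomputable def Rmove (m i : ℕ) (X : ℕ → ℕ → ℝ) : ℕ → ℕ → ℝ :=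
  (List.range (min i m)).foldl (fun Y k => piMove (i - k) (m - k) Y) X

/-- gRSK on an `n × m` array: `gRSK = R_n ∘ ⋯ ∘ R_1`. -/
noncomputable def gRSK (n m : ℕ) (X : ℕ → ℕ → ℝ) : ℕ → ℕ → ℝ :=
  (List.range n).foldl (fun Y k => Rmove m (k + 1) Y) X

/-- `ρ^i_j = l_{1,j-i+1} ∘ ⋯ ∘ l_{i-1,j-1} ∘ l_{ij}` for `i ≤ j`, resp.
`ρ^i_j = l_{i-j+1,1} ∘ ⋯ ∘ l_{i-1,j-1} ∘ l_{ij}` for `i ≥ j`. -/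
noncomputable def rhoMove (i j : ℕ) (X : ℕ → ℕ → ℝ) : ℕ → ℕ → ℝ :=
  (List.range (min i j)).foldl (fun Y k => lmove (i - k) (j - k) Y) X

/-- One time step of geometric PNG: `ρ^1_t ∘ ⋯ ∘ ρ^t_1`. -/
noncomputable def pngStage (t : ℕ) (X : ℕ → ℕ → ℝ) : ℕ → ℕ → ℝ :=
  (List.range t).foldl (fun Y k => rhoMove (t - k) (1 + k) Y) X

/-- Geometric PNG on the triangular array `(w_{ij} : i+j-1 ≤ n)`:
`gPNG = (ρ^1_n ∘ ⋯ ∘ ρ^n_1) ∘ ⋯ ∘ (ρ^1_2 ∘ ρ^2_1) ∘ ρ^1_1`. -/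
noncomputable def gPNG (n : ℕ) (X : ℕ → ℕ → ℝ) : ℕ → ℕ → ℝ :=
  (List.range n).foldl (fun Y t => pngStage (t + 1) Y) X

/-- The weight of the down-right lattice path from `(1,1)` to `(p,q)` encoded by
the sequence of steps `s` (`true` = down, i.e. increase the first index): the
product of the entries of `w` along the path. -/
noncomputable def pathWeight (w : ℕ → ℕ → ℝ) (p q : ℕ) (s : Fin (p + q - 2) → Bool) : ℝ :=
  ∏ k ∈ Finset.range (p + q - 1),
    w (1 + ((List.ofFn s).take k).count true)
      (1 + (k - ((List.ofFn s).take k).count true))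

/-- The point-to-point polymer partition function
`Z_{p,q} = Σ_{π : (1,1) → (p,q) down-right} Π_{(i,j) ∈ π} w_{ij}`,
the sum running over all down-right lattice paths from `(1,1)` to `(p,q)`. -/
noncomputable def partitionFn (w : ℕ → ℕ → ℝ) (p q : ℕ) : ℝ :=
  ∑ s ∈ Finset.univ.filter
      (fun s : Fin (p + q - 2) → Bool => (List.ofFn s).count true = p - 1),
    pathWeight w p q s

/-- Index set of the triangular array `(i,j)` with `1 ≤ i, 1 ≤ j, i+j-1 ≤ n`. -/
def triFinset (n : ℕ) : Finset (ℕ × ℕ) :=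
  (Finset.Icc 1 n ×ˢ Finset.Icc 1 n).filter fun p => p.1 + p.2 - 1 ≤ n

/-- gPNG on a triangular array, viewed in logarithmic coordinates as a map
`ℝ^{triangle} → ℝ^{triangle}`. -/
noncomputable def gPNGlog (n : ℕ) (x : {p // p ∈ triFinset n} → ℝ) :
    {p // p ∈ triFinset n} → ℝ :=
  fun p => Real.log
    (gPNG n
      (fun i j => if h : (i, j) ∈ triFinset n then Real.exp (x ⟨(i, j), h⟩) else 1)
      p.1.1 p.1.2)

/-!
In logarithmic coordinates every local move `l_{ij}` factors into maps that change a single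
coordinate. Inverting the entry `a` becomes the reflection `x_a ↦ -x_a`; multiplying an entry by a
positive factor that does not depend on it (`a ↦ a · bc/(b+c)`, `d ↦ d (b+c)`, or `x_{1j} ↦ x_{1j}
x_{1,j-1}` on the boundary) becomes a shear `x ↦ x + φ(x) e_r` with `∂_r φ = 0`. Since
`det (id + ℓ ⊗ v) = 1 + ℓ v`, these have Jacobian determinant `-1` and `1`. Maps with Jacobian
determinant `±1` everywhere are closed under composition, and gPNG is a composition of local
moves, each of which keeps positive arrays positive (and equal to `1` off the triangle).
-/

open Function Set

section UnitJacobian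

variable {E : Type*} [NormedAddCommGroup E] [NormedSpace ℝ E]

variable (E) in
def unitJacobian : Submonoid (Function.End E) where
  carrier := {F | Differentiable ℝ F ∧ ∀ x, |LinearMap.det (fderiv ℝ F x).toLinearMap| = 1}
  one_mem' := ⟨differentiable_id, fun x => by simp [show (1 : Function.End E) = id from rfl]⟩
  mul_mem' := by
    rintro F G ⟨hF, hF'⟩ ⟨hG, hG'⟩
    refine ⟨hF.comp hG, fun x => ?_⟩
    rw [show F * G = F ∘ G from rfl, fderiv_comp x (hF _) (hG x),
      ContinuousLinearMap.toLinearMap_comp, LinearMap.det_comp, abs_mul, hF', hG', one_mul]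

theorem Submonoid.foldl_mem {β α : Type*} {M : Submonoid (Function.End β)} (g : α → β → β)
    (l : List α) (hg : ∀ a ∈ l, g a ∈ M) : (fun X => l.foldl (fun Y a => g a Y) X) ∈ M := by
  induction l with
  | nil => exact M.one_mem
  | cons a l ih =>
    exact M.mul_mem (ih fun b hb => hg b (List.mem_cons_of_mem a hb)) (hg a List.mem_cons_self)

def shear (v : E) (φ : E → ℝ) (x : E) : E := x + φ x • v

theorem hasFDerivAt_shear (v : E) {φ : E → ℝ} {φ' : E →L[ℝ] ℝ} {x : E}
    (hφ : HasFDerivAt φ φ' x) :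
    HasFDerivAt (shear v φ) (ContinuousLinearMap.id ℝ E + φ'.smulRight v) x :=
  (hasFDerivAt_id x).add (hφ.smul_const v)

theorem fderiv_apply_eq_zero_of_forall_add_smul {φ : E → ℝ} {x v : E}
    (hφ : DifferentiableAt ℝ φ x) (h : ∀ t : ℝ, φ (x + t • v) = φ x) : fderiv ℝ φ x v = 0 := by
  rw [← hφ.lineDeriv_eq_fderiv, lineDeriv, funext h, deriv_const]

variable [FiniteDimensional ℝ E]

theorem shear_mem_unitJacobian (v : E) {φ : E → ℝ} (hφ : Differentiable ℝ φ)
    (h : ∀ x, |1 + fderiv ℝ φ x v| = 1) : shear v φ ∈ unitJacobian E := by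
  refine ⟨fun x => (hasFDerivAt_shear v (hφ x).hasFDerivAt).differentiableAt, fun x => ?_⟩
  have : (ContinuousLinearMap.id ℝ E + (fderiv ℝ φ x).smulRight v).toLinearMap =
      LinearMap.transvection (fderiv ℝ φ x).toLinearMap v := rfl
  rw [(hasFDerivAt_shear v (hφ x).hasFDerivAt).fderiv, this, LinearMap.transvection.det]
  exact h x

theorem shear_mem_unitJacobian_of_invariant (v : E) {φ : E → ℝ} (hφ : Differentiable ℝ φ)
    (h : ∀ x (t : ℝ), φ (x + t • v) = φ x) : shear v φ ∈ unitJacobian E :=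
  shear_mem_unitJacobian v hφ fun x => by
    rw [fderiv_apply_eq_zero_of_forall_add_smul (hφ x) (h x), add_zero, abs_one]

theorem shear_clm_mem_unitJacobian (v : E) (ℓ : E →L[ℝ] ℝ) (h : |1 + ℓ v| = 1) :
    shear v ℓ ∈ unitJacobian E :=
  shear_mem_unitJacobian v ℓ.differentiable fun x => by rwa [ℓ.fderiv]

end UnitJacobian

noncomputable section LogCoordinates

variable {n : ℕ}

theorem mem_triFinset {i j : ℕ} : (i, j) ∈ triFinset n ↔ 1 ≤ i ∧ 1 ≤ j ∧ i + j ≤ n + 1 := by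
  simp only [triFinset, Finset.mem_filter, Finset.mem_product, Finset.mem_Icc]
  omega

-- The same array as in `gPNGlog`, so that `gPNGlog n = logConj n (gPNG n)` holds by definition.
def expArray (n : ℕ) (x : {p // p ∈ triFinset n} → ℝ) : ℕ → ℕ → ℝ :=
  fun i j => if h : (i, j) ∈ triFinset n then Real.exp (x ⟨(i, j), h⟩) else 1

def logConj (n : ℕ) (F : (ℕ → ℕ → ℝ) → ℕ → ℕ → ℝ) (x : {p // p ∈ triFinset n} → ℝ) :
    {p // p ∈ triFinset n} → ℝ :=
  fun p => Real.log (F (expArray n x) p.1.1 p.1.2)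

def posTriArrays (n : ℕ) : Set (ℕ → ℕ → ℝ) :=
  {X | ∀ i j, ((i, j) ∈ triFinset n → 0 < X i j) ∧ ((i, j) ∉ triFinset n → X i j = 1)}

theorem expArray_of_mem (x : {p // p ∈ triFinset n} → ℝ) {i j : ℕ} (h : (i, j) ∈ triFinset n) :
    expArray n x i j = Real.exp (x ⟨(i, j), h⟩) :=
  dif_pos h

theorem expArray_mem_posTriArrays (x : {p // p ∈ triFinset n} → ℝ) :
    expArray n x ∈ posTriArrays n := fun i j =>
  ⟨fun h => by rw [expArray_of_mem x h]; positivity, fun h => dif_neg h⟩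

theorem log_expArray (x : {p // p ∈ triFinset n} → ℝ) (p : {p // p ∈ triFinset n}) :
    Real.log (expArray n x p.1.1 p.1.2) = x p := by
  rw [expArray_of_mem x p.2, Real.log_exp]

theorem expArray_log {X : ℕ → ℕ → ℝ} (hX : X ∈ posTriArrays n) :
    expArray n (fun p => Real.log (X p.1.1 p.1.2)) = X := by
  funext i j
  by_cases h : (i, j) ∈ triFinset n
  · rw [expArray_of_mem _ h, Real.exp_log ((hX i j).1 h)]
  · exact ((hX i j).2 h).symm ▸ dif_neg h

theorem logConj_id : logConj n id = id :=
  funext fun x => funext (log_expArray x)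

theorem expArray_logConj {F : (ℕ → ℕ → ℝ) → ℕ → ℕ → ℝ} {x : {p // p ∈ triFinset n} → ℝ}
    (h : F (expArray n x) ∈ posTriArrays n) : expArray n (logConj n F x) = F (expArray n x) :=
  expArray_log h

theorem logConj_comp {F G : (ℕ → ℕ → ℝ) → ℕ → ℕ → ℝ}
    (hG : MapsTo G (posTriArrays n) (posTriArrays n)) :
    logConj n (F ∘ G) = logConj n F ∘ logConj n G := by
  funext x p
  simp only [comp_apply, logConj, expArray_logConj (hG (expArray_mem_posTriArrays x))]

variable (n) in
def logUnitJacobian : Submonoid (Function.End (ℕ → ℕ → ℝ)) where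
  carrier := {F | MapsTo F (posTriArrays n) (posTriArrays n) ∧
    logConj n F ∈ unitJacobian ({p // p ∈ triFinset n} → ℝ)}
  one_mem' := ⟨mapsTo_id _, by
    rw [show (1 : Function.End (ℕ → ℕ → ℝ)) = id from rfl, logConj_id]
    exact (unitJacobian _).one_mem⟩
  mul_mem' := by
    rintro F G ⟨hF, hF'⟩ ⟨hG, hG'⟩
    refine ⟨hF.comp hG, ?_⟩
    exact (logConj_comp hG).symm ▸ (unitJacobian _).mul_mem hF' hG'

theorem mem_logUnitJacobian {F : (ℕ → ℕ → ℝ) → ℕ → ℕ → ℝ} :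
    F ∈ logUnitJacobian n ↔ MapsTo F (posTriArrays n) (posTriArrays n) ∧
      logConj n F ∈ unitJacobian ({p // p ∈ triFinset n} → ℝ) :=
  Iff.rfl

end LogCoordinates

noncomputable section EntryMoves

variable {n i j : ℕ}

def mulEntry (i j : ℕ) (f : (ℕ → ℕ → ℝ) → ℝ) (X : ℕ → ℕ → ℝ) : ℕ → ℕ → ℝ :=
  fun p q => if p = i ∧ q = j then X i j * f X else X p q

def invEntry (i j : ℕ) (X : ℕ → ℕ → ℝ) : ℕ → ℕ → ℝ :=
  fun p q => if p = i ∧ q = j then (X i j)⁻¹ else X p q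

theorem mapsTo_mulEntry (hij : (i, j) ∈ triFinset n) {f : (ℕ → ℕ → ℝ) → ℝ}
    (hf : ∀ X ∈ posTriArrays n, 0 < f X) :
    MapsTo (mulEntry i j f) (posTriArrays n) (posTriArrays n) := by
  intro X hX p q
  by_cases hpq : p = i ∧ q = j
  · obtain ⟨rfl, rfl⟩ := hpq
    simp only [mulEntry, and_self, if_true]
    exact ⟨fun _ => mul_pos ((hX p q).1 hij) (hf X hX), fun h => absurd hij h⟩
  · simp only [mulEntry, if_neg hpq]
    exact hX p q

theorem mapsTo_invEntry (hij : (i, j) ∈ triFinset n) :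
    MapsTo (invEntry i j) (posTriArrays n) (posTriArrays n) := by
  intro X hX p q
  by_cases hpq : p = i ∧ q = j
  · obtain ⟨rfl, rfl⟩ := hpq
    simp only [invEntry, and_self, if_true]
    exact ⟨fun _ => inv_pos.2 ((hX p q).1 hij), fun h => absurd hij h⟩
  · simp only [invEntry, if_neg hpq]
    exact hX p q

theorem not_entry_eq_of_ne {p r : {p // p ∈ triFinset n}} (h : p ≠ r) :
    ¬(p.1.1 = r.1.1 ∧ p.1.2 = r.1.2) := fun h' => h (Subtype.ext (Prod.ext h'.1 h'.2))

theorem logConj_mulEntry (hij : (i, j) ∈ triFinset n) {f : (ℕ → ℕ → ℝ) → ℝ}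
    (hf : ∀ X ∈ posTriArrays n, 0 < f X) :
    logConj n (mulEntry i j f) =
      shear (Pi.single ⟨(i, j), hij⟩ 1) fun x => Real.log (f (expArray n x)) := by
  funext x p
  have hpos := hf _ (expArray_mem_posTriArrays x)
  simp only [logConj, mulEntry, shear, Pi.add_apply, Pi.smul_apply, smul_eq_mul]
  by_cases hp : p = ⟨(i, j), hij⟩
  · subst hp
    simp only [and_self, if_true, Pi.single_eq_same, mul_one]
    rw [Real.log_mul ((expArray_mem_posTriArrays x i j).1 hij).ne' hpos.ne',
      log_expArray x ⟨(i, j), hij⟩]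
  · rw [if_neg (not_entry_eq_of_ne hp), log_expArray, Pi.single_eq_of_ne hp, mul_zero, add_zero]

theorem logConj_invEntry (hij : (i, j) ∈ triFinset n) :
    logConj n (invEntry i j) =
      shear (Pi.single ⟨(i, j), hij⟩ 1)
        ((-2 : ℝ) • ContinuousLinearMap.proj (R := ℝ) (φ := fun _ => ℝ) ⟨(i, j), hij⟩) := by
  funext x p
  simp only [logConj, invEntry, shear, Pi.add_apply, Pi.smul_apply, smul_eq_mul,
    _root_.smul_apply, ContinuousLinearMap.proj_apply]
  by_cases hp : p = ⟨(i, j), hij⟩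
  · subst hp
    simp only [and_self, if_true, Pi.single_eq_same, mul_one, Real.log_inv]
    rw [log_expArray x ⟨(i, j), hij⟩]
    ring
  · rw [if_neg (not_entry_eq_of_ne hp), log_expArray, Pi.single_eq_of_ne hp, mul_zero, add_zero]

theorem invEntry_mem_logUnitJacobian (hij : (i, j) ∈ triFinset n) :
    invEntry i j ∈ logUnitJacobian n := by
  refine ⟨mapsTo_invEntry hij, ?_⟩
  rw [logConj_invEntry hij]
  exact shear_clm_mem_unitJacobian _ _ (by norm_num)

theorem expArray_add_smul_single_of_ne (x : {p // p ∈ triFinset n} → ℝ) (t : ℝ)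
    (r : {p // p ∈ triFinset n}) {p q : ℕ} (hpq : (p, q) ≠ r.1) :
    expArray n (x + t • Pi.single r 1) p q = expArray n x p q := by
  by_cases h : (p, q) ∈ triFinset n
  · have hr : (⟨(p, q), h⟩ : {p // p ∈ triFinset n}) ≠ r := fun h' => hpq (congrArg Subtype.val h')
    rw [expArray_of_mem _ h, expArray_of_mem _ h, Pi.add_apply, Pi.smul_apply,
      Pi.single_eq_of_ne hr, smul_zero, add_zero]
  · rw [expArray, dif_neg h, expArray, dif_neg h]

theorem mulEntry_mem_logUnitJacobian (hij : (i, j) ∈ triFinset n) {f : (ℕ → ℕ → ℝ) → ℝ}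
    (hf : ∀ X ∈ posTriArrays n, 0 < f X)
    (hf_local : ∀ X Y : ℕ → ℕ → ℝ, (∀ p q, (p, q) ≠ (i, j) → X p q = Y p q) → f X = f Y)
    (hφ : Differentiable ℝ fun x => Real.log (f (expArray n x))) :
    mulEntry i j f ∈ logUnitJacobian n := by
  refine ⟨mapsTo_mulEntry hij hf, ?_⟩
  rw [logConj_mulEntry hij hf]
  refine shear_mem_unitJacobian_of_invariant _ hφ fun x t => ?_
  rw [hf_local _ _ fun p q hpq => expArray_add_smul_single_of_ne x t _ hpq]

end EntryMoves

section LocalMoves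

variable {n i j : ℕ}

theorem lmove_one_one : lmove 1 1 = id := by
  funext X
  simp [lmove]

theorem lmove_one_left (hj : 2 ≤ j) : lmove 1 j = mulEntry 1 j fun X => X 1 (j - 1) := by
  funext X p q
  simp only [lmove, mulEntry, show j ≠ 1 by omega, and_false, if_false, if_true, mul_comm]

theorem lmove_left_one (hi : 2 ≤ i) : lmove i 1 = mulEntry i 1 fun X => X (i - 1) 1 := by
  funext X p q
  simp only [lmove, mulEntry, show i ≠ 1 by omega, and_true, if_false, if_true, mul_comm]

theorem lmove_eq_comp (hi : 2 ≤ i) (hj : 2 ≤ j) :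
    lmove i j =
      mulEntry i j (fun X => X (i - 1) j + X i (j - 1)) ∘
        mulEntry (i - 1) (j - 1)
          (fun X => X (i - 1) j * X i (j - 1) / (X (i - 1) j + X i (j - 1))) ∘
        invEntry (i - 1) (j - 1) := by
  funext X p q
  simp only [lmove, mulEntry, invEntry, comp_apply, show i ≠ 1 by omega, show j ≠ 1 by omega,
    if_false, and_self, if_true]
  split_ifs <;> first | omega | field_simp

theorem mulEntry_mem_logUnitJacobian_of_entries {a b c d : ℕ} (hij : (i, j) ∈ triFinset n)
    (hab : (a, b) ∈ triFinset n) (hcd : (c, d) ∈ triFinset n)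
    (hab_ne : (a, b) ≠ (i, j)) (hcd_ne : (c, d) ≠ (i, j)) {g : ℝ → ℝ → ℝ}
    (hg_pos : ∀ u v, 0 < u → 0 < v → 0 < g u v)
    (hg : Differentiable ℝ fun z : ℝ × ℝ => Real.log (g (Real.exp z.1) (Real.exp z.2))) :
    mulEntry i j (fun X => g (X a b) (X c d)) ∈ logUnitJacobian n := by
  refine mulEntry_mem_logUnitJacobian hij
    (fun X hX => hg_pos _ _ ((hX a b).1 hab) ((hX c d).1 hcd))
    (fun X Y hXY => by rw [hXY a b hab_ne, hXY c d hcd_ne]) ?_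
  simp only [expArray_of_mem _ hab, expArray_of_mem _ hcd]
  exact hg.comp ((differentiable_apply _).prodMk (differentiable_apply _))

theorem mulEntry_mem_logUnitJacobian_of_entry {a b : ℕ} (hij : (i, j) ∈ triFinset n)
    (hab : (a, b) ∈ triFinset n) (hab_ne : (a, b) ≠ (i, j)) :
    mulEntry i j (fun X => X a b) ∈ logUnitJacobian n :=
  mulEntry_mem_logUnitJacobian_of_entries (g := fun u _ => u) hij hab hab hab_ne hab_ne
    (fun _ _ hu _ => hu) (by simpa only [Real.log_exp] using differentiable_fst)

theorem differentiable_log_exp_add_exp :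
    Differentiable ℝ fun z : ℝ × ℝ => Real.log (Real.exp z.1 + Real.exp z.2) :=
  (by fun_prop : Differentiable ℝ fun z : ℝ × ℝ => Real.exp z.1 + Real.exp z.2).log
    fun _ => by positivity

theorem differentiable_log_exp_mul_exp_div :
    Differentiable ℝ fun z : ℝ × ℝ =>
      Real.log (Real.exp z.1 * Real.exp z.2 / (Real.exp z.1 + Real.exp z.2)) := by
  have h (z : ℝ × ℝ) : Real.log (Real.exp z.1 * Real.exp z.2 / (Real.exp z.1 + Real.exp z.2)) =
      z.1 + z.2 - Real.log (Real.exp z.1 + Real.exp z.2) := by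
    rw [Real.log_div (by positivity) (by positivity), Real.log_mul (by positivity) (by positivity),
      Real.log_exp, Real.log_exp]
  simp only [h]
  exact (by fun_prop : Differentiable ℝ fun z : ℝ × ℝ => z.1 + z.2).sub
    differentiable_log_exp_add_exp

theorem lmove_mem_logUnitJacobian_of_two_le (hi : 2 ≤ i) (hj : 2 ≤ j) (hij : i + j ≤ n + 1) :
    lmove i j ∈ logUnitJacobian n := by
  have ha : (i - 1, j - 1) ∈ triFinset n := mem_triFinset.2 (by omega)
  have hb : (i - 1, j) ∈ triFinset n := mem_triFinset.2 (by omega)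
  have hc : (i, j - 1) ∈ triFinset n := mem_triFinset.2 (by omega)
  have hd : (i, j) ∈ triFinset n := mem_triFinset.2 (by omega)
  rw [lmove_eq_comp hi hj]
  refine (logUnitJacobian n).mul_mem ?_
    ((logUnitJacobian n).mul_mem ?_ (invEntry_mem_logUnitJacobian ha))
  · exact mulEntry_mem_logUnitJacobian_of_entries (g := fun u v => u + v) hd hb hc
      (by grind) (by grind) (fun _ _ hu hv => by positivity)
      differentiable_log_exp_add_exp
  · exact mulEntry_mem_logUnitJacobian_of_entries (g := fun u v => u * v / (u + v)) ha hb hc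
      (by grind) (by grind) (fun _ _ hu hv => by positivity)
      differentiable_log_exp_mul_exp_div

theorem lmove_mem_logUnitJacobian (hij : (i, j) ∈ triFinset n) : lmove i j ∈ logUnitJacobian n := by
  obtain ⟨hi, hj, hn⟩ := mem_triFinset.1 hij
  rcases (show i = 1 ∨ 2 ≤ i by omega) with rfl | hi <;>
    rcases (show j = 1 ∨ 2 ≤ j by omega) with rfl | hj
  · exact lmove_one_one ▸ (logUnitJacobian n).one_mem
  · rw [lmove_one_left hj]
    exact mulEntry_mem_logUnitJacobian_of_entry hij (mem_triFinset.2 (by omega)) (by grind)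
  · rw [lmove_left_one hi]
    exact mulEntry_mem_logUnitJacobian_of_entry hij (mem_triFinset.2 (by omega)) (by grind)
  · exact lmove_mem_logUnitJacobian_of_two_le hi hj hn

end LocalMoves

theorem rhoMove_mem_logUnitJacobian {n i j : ℕ} (h : i + j ≤ n + 1) :
    rhoMove i j ∈ logUnitJacobian n :=
  Submonoid.foldl_mem _ _ fun k hk =>
    lmove_mem_logUnitJacobian (mem_triFinset.2 (by rw [List.mem_range] at hk; omega))

theorem pngStage_mem_logUnitJacobian {n t : ℕ} (h : t ≤ n) : pngStage t ∈ logUnitJacobian n :=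
  Submonoid.foldl_mem _ _ fun k hk =>
    rhoMove_mem_logUnitJacobian (by rw [List.mem_range] at hk; omega)

theorem gPNG_mem_logUnitJacobian (n : ℕ) : gPNG n ∈ logUnitJacobian n :=
  Submonoid.foldl_mem _ _ fun t ht =>
    pngStage_mem_logUnitJacobian (by rw [List.mem_range] at ht; omega)

/-- Geometric PNG is volume preserving in logarithmic variables:
the map `(log w_{ij}) ↦ (log h_{ij})` has Jacobian determinant `±1`. -/
theorem gPNG_volume_preserving (n : ℕ) (x : {p // p ∈ triFinset n} → ℝ) :
    |LinearMap.det (fderiv ℝ (gPNGlog n) x).toLinearMap| = 1 :=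
  (mem_logUnitJacobian.1 (gPNG_mem_logUnitJacobian n)).2.2 x
end

section
/- Let W = (w_{ij})_{1 ≤ i+j−1 ≤ n} be a positive triangular array and H = (h_{ij}) = gPNG(W). Then for every pair (p,q) with p+q = n+1 or p+q = n, one has Π_{r=0}^{p∧q−1} h_{p−r,q−r} = Π_{i≤p, j≤q} w_{ij}; i.e., the product of the entries of H along the north-west diagonal starting at (p,q) equals the product of all input entries in the rectangle [1,p]×[1,q]. -/
/-!
Each interior local move `l_{ij}` changes only the corners `a = x_{i-1,j-1}`, `d = x_{ij}` of its
`2 × 2` block, and `a' d' = b c d / a`. Sweeping the north-west diagonal through `(i,j)`, the move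
`ρ^i_j` therefore turns the diagonal products `D` into `D'` with
`D'(i,j) D(i-1,j-1) = x_{ij} D(i-1,j) D(i,j-1)`, the recurrence satisfied by the rectangle
products `R(p,q) = ∏_{[1,p]×[1,q]} w`. The moves `ρ` of one PNG stage sit on the antidiagonal
`p + q = t + 1` and only touch cells with `p + q ≡ t + 1 (mod 2)`, so each of them reads its
neighbouring diagonals unchanged, and induction on `t` gives `D = R` on the antidiagonals
`p + q ∈ {t, t + 1}`.
-/

noncomputable def diagProd (X : ℕ → ℕ → ℝ) (p q : ℕ) : ℝ :=
  ∏ r ∈ Finset.range (min p q), X (p - r) (q - r)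

noncomputable def rectProd (W : ℕ → ℕ → ℝ) (p q : ℕ) : ℝ :=
  ∏ ij ∈ Finset.Icc 1 p ×ˢ Finset.Icc 1 q, W ij.1 ij.2

section Products

variable (X : ℕ → ℕ → ℝ)

@[simp] lemma diagProd_zero_left (q : ℕ) : diagProd X 0 q = 1 := by simp [diagProd]

@[simp] lemma diagProd_zero_right (p : ℕ) : diagProd X p 0 = 1 := by simp [diagProd]

lemma diagProd_succ_succ (p q : ℕ) :
    diagProd X (p + 1) (q + 1) = X (p + 1) (q + 1) * diagProd X p q := by
  simp only [diagProd, Nat.add_min_add_right, Finset.prod_range_succ', Nat.sub_zero]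
  rw [mul_comm]
  congr 1
  exact Finset.prod_congr rfl fun r _ => by simp only [Nat.add_sub_add_right]

lemma diagProd_congr {Y : ℕ → ℕ → ℝ} {p q : ℕ}
    (h : ∀ r < min p q, Y (p - r) (q - r) = X (p - r) (q - r)) :
    diagProd Y p q = diagProd X p q :=
  Finset.prod_congr rfl fun r hr => h r (Finset.mem_range.mp hr)

@[simp] lemma rectProd_zero_left (q : ℕ) : rectProd X 0 q = 1 := by simp [rectProd]

@[simp] lemma rectProd_zero_right (p : ℕ) : rectProd X p 0 = 1 := by simp [rectProd]

lemma rectProd_succ_succ (p q : ℕ) :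
    rectProd X (p + 1) (q + 1) * rectProd X p q
      = X (p + 1) (q + 1) * rectProd X p (q + 1) * rectProd X (p + 1) q := by
  simp only [rectProd, Finset.prod_product, Finset.prod_Icc_succ_top (Nat.le_add_left 1 _)]
  ring

lemma rectProd_pos {p q : ℕ} (h : ∀ a b, 1 ≤ a → a ≤ p → 1 ≤ b → b ≤ q → 0 < X a b) :
    0 < rectProd X p q :=
  Finset.prod_pos fun ab hab => by
    simp only [Finset.mem_product, Finset.mem_Icc] at hab
    exact h _ _ hab.1.1 hab.1.2 hab.2.1 hab.2.2

end Products

section LocalMove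

variable (X : ℕ → ℕ → ℝ)

lemma lmove_apply_of_ne {i j p q : ℕ} (h₁ : ¬(p = i ∧ q = j)) (h₂ : ¬(p = i - 1 ∧ q = j - 1)) :
    lmove i j X p q = X p q := by
  unfold lmove
  split_ifs <;> grind

-- The factor `diagProd X 1 j` is `X 1 j`, or `1` for `j = 0`, where `l₁₁` is the identity.
lemma lmove_one_apply_self (j : ℕ) : lmove 1 (j + 1) X 1 (j + 1) = X 1 (j + 1) * diagProd X 1 j := by
  rcases j with _ | j
  · simp [lmove]
  · simp [lmove, diagProd_succ_succ, mul_comm]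

lemma lmove_apply_self_one (i : ℕ) : lmove (i + 1) 1 X (i + 1) 1 = X (i + 1) 1 * diagProd X i 1 := by
  rcases i with _ | i
  · simp [lmove]
  · simp [lmove, diagProd_succ_succ, mul_comm]

lemma lmove_apply_self {i j : ℕ} (hi : 2 ≤ i) (hj : 2 ≤ j) :
    lmove i j X i j = X i j * (X (i - 1) j + X i (j - 1)) := by
  unfold lmove
  rw [if_neg (by omega), if_neg (by omega), if_neg (by omega), if_neg (by omega),
    if_pos ⟨rfl, rfl⟩]

lemma lmove_apply_pred {i j : ℕ} (hi : 2 ≤ i) (hj : 2 ≤ j) :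
    lmove i j X (i - 1) (j - 1)
      = X (i - 1) j * X i (j - 1) / (X (i - 1) (j - 1) * (X (i - 1) j + X i (j - 1))) := by
  unfold lmove
  rw [if_neg (by omega), if_neg (by omega), if_neg (by omega), if_pos ⟨rfl, rfl⟩]

lemma lmove_pos {N i j : ℕ} (hi : 1 ≤ i) (hj : 1 ≤ j) (hij : i + j ≤ N)
    (hX : ∀ p q, 1 ≤ p → 1 ≤ q → p + q ≤ N → 0 < X p q)
    {p q : ℕ} (hp : 1 ≤ p) (hq : 1 ≤ q) (hpq : p + q ≤ N) : 0 < lmove i j X p q := by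
  unfold lmove
  split_ifs
  · exact hX p q hp hq hpq
  all_goals
    beta_reduce
    split_ifs
    all_goals
      try casesm* _ ∧ _
      subst_vars
      apply_rules [div_pos, mul_pos, add_pos, hX] <;> omega

end LocalMove

section Diagonal

variable (X : ℕ → ℕ → ℝ)

@[simp] lemma rhoMove_zero_left (j : ℕ) : rhoMove 0 j X = X := by simp [rhoMove]

lemma rhoMove_succ_succ (i j : ℕ) :
    rhoMove (i + 1) (j + 1) X = rhoMove i j (lmove (i + 1) (j + 1) X) := by
  simp only [rhoMove, Nat.add_min_add_right, List.range_succ_eq_map, List.foldl_cons,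
    List.foldl_map, Nat.succ_eq_add_one, Nat.add_sub_add_right, Nat.sub_zero]

lemma rhoMove_apply_of_not_mem_diag {i j p q : ℕ} (h : ∀ m, ¬(p + m = i ∧ q + m = j)) :
    rhoMove i j X p q = X p q := by
  induction i generalizing j X with
  | zero => simp
  | succ i ih =>
    rcases j with _ | j
    · simp [rhoMove]
    rw [rhoMove_succ_succ, ih (j := j) _ fun m hm => h (m + 1) (by omega),
      lmove_apply_of_ne _ (fun hm => h 0 (by omega)) (fun hm => h 1 (by omega))]

lemma rhoMove_pos {N i j : ℕ} (hij : i + j ≤ N) (hX : ∀ p q, 1 ≤ p → 1 ≤ q → p + q ≤ N → 0 < X p q)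
    {p q : ℕ} (hp : 1 ≤ p) (hq : 1 ≤ q) (hpq : p + q ≤ N) : 0 < rhoMove i j X p q := by
  induction i generalizing j X with
  | zero => simpa using hX p q hp hq hpq
  | succ i ih =>
    rcases j with _ | j
    · simpa [rhoMove] using hX p q hp hq hpq
    rw [rhoMove_succ_succ]
    exact ih (j := j) _ (by omega) fun a b ha hb hab =>
      lmove_pos X (by omega) (by omega) hij hX ha hb hab

lemma diagProd_lmove_of_lt {i j p q : ℕ} (h : p + 1 < i ∨ q + 1 < j) :
    diagProd (lmove i j X) p q = diagProd X p q :=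
  diagProd_congr X fun r _ => lmove_apply_of_ne X (p := p - r) (q := q - r) (by omega) (by omega)

theorem diagProd_rhoMove (i j : ℕ)
    (hX : ∀ p q, 1 ≤ p → 1 ≤ q → p + q < i + j + 2 → 0 < X p q) :
    diagProd (rhoMove (i + 1) (j + 1) X) (i + 1) (j + 1) * diagProd X i j
      = X (i + 1) (j + 1) * diagProd X i (j + 1) * diagProd X (i + 1) j := by
  induction i generalizing j X with
  | zero =>
    simp [rhoMove_succ_succ, diagProd_succ_succ, lmove_one_apply_self]
  | succ i ih =>
    rcases j with _ | j
    · simp [diagProd_succ_succ, lmove_apply_self_one, rhoMove]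
    rw [rhoMove_succ_succ]
    set Y := lmove (i + 1 + 1) (j + 1 + 1) X
    have hYX : ∀ p q, p + q < i + j + 2 → Y p q = X p q := fun p q hpq =>
      lmove_apply_of_ne X (p := p) (q := q) (by omega) (by omega)
    have ih' := ih Y j fun p q hp hq hpq => hYX p q hpq ▸ hX p q hp hq (by omega)
    rw [diagProd_lmove_of_lt X (by omega), diagProd_lmove_of_lt X (by omega),
      diagProd_lmove_of_lt X (by omega)] at ih'
    have hd : rhoMove (i + 1) (j + 1) Y (i + 1 + 1) (j + 1 + 1) = Y (i + 1 + 1) (j + 1 + 1) :=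
      rhoMove_apply_of_not_mem_diag Y (by omega)
    rw [diagProd_succ_succ, hd, diagProd_succ_succ X i j, diagProd_succ_succ X i (j + 1),
      diagProd_succ_succ X (i + 1) j]
    have hd' : Y (i + 1 + 1) (j + 1 + 1)
        = X (i + 1 + 1) (j + 1 + 1) * (X (i + 1) (j + 1 + 1) + X (i + 1 + 1) (j + 1)) :=
      lmove_apply_self X (by omega) (by omega)
    have ha' : Y (i + 1) (j + 1)
        = X (i + 1) (j + 1 + 1) * X (i + 1 + 1) (j + 1)
          / (X (i + 1) (j + 1) * (X (i + 1) (j + 1 + 1) + X (i + 1 + 1) (j + 1))) :=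
      lmove_apply_pred X (by omega) (by omega)
    have ha := hX (i + 1) (j + 1) (by omega) (by omega) (by omega)
    have hb := hX (i + 1) (j + 1 + 1) (by omega) (by omega) (by omega)
    have hc := hX (i + 1 + 1) (j + 1) (by omega) (by omega) (by omega)
    rw [hd', mul_mul_mul_comm, ih', ha']
    field_simp

end Diagonal

section Stage

variable (X : ℕ → ℕ → ℝ)

lemma foldl_rhoMove_apply_of_not_mem_diag (l : List ℕ) (f g : ℕ → ℕ) {p q : ℕ}
    (h : ∀ k ∈ l, ∀ m, ¬(p + m = f k ∧ q + m = g k)) :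
    l.foldl (fun Y k => rhoMove (f k) (g k) Y) X p q = X p q := by
  induction l generalizing X with
  | nil => rfl
  | cons k l ih =>
    rw [List.foldl_cons, ih _ fun k' hk' => h k' (List.mem_cons_of_mem k hk'),
      rhoMove_apply_of_not_mem_diag X (h k List.mem_cons_self)]

lemma foldl_rhoMove_pos {N : ℕ} (l : List ℕ) (f g : ℕ → ℕ) (hl : ∀ k ∈ l, f k + g k ≤ N)
    (hX : ∀ p q, 1 ≤ p → 1 ≤ q → p + q ≤ N → 0 < X p q) {p q : ℕ} (hp : 1 ≤ p) (hq : 1 ≤ q)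
    (hpq : p + q ≤ N) : 0 < l.foldl (fun Y k => rhoMove (f k) (g k) Y) X p q := by
  induction l generalizing X with
  | nil => exact hX p q hp hq hpq
  | cons k l ih =>
    exact ih _ (fun k' hk' => hl k' (List.mem_cons_of_mem k hk'))
      fun a b ha hb hab => rhoMove_pos X (hl k List.mem_cons_self) hX ha hb hab

lemma pngStage_apply_of_ne {s p q : ℕ} (h : ∀ m, p + q + 2 * m ≠ s + 1) :
    pngStage s X p q = X p q :=
  foldl_rhoMove_apply_of_not_mem_diag X _ _ _ fun k hk m hm =>
    h m (by rw [List.mem_range] at hk; omega)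

lemma pngStage_pos {N s : ℕ} (hs : s + 1 ≤ N) (hX : ∀ p q, 1 ≤ p → 1 ≤ q → p + q ≤ N → 0 < X p q)
    {p q : ℕ} (hp : 1 ≤ p) (hq : 1 ≤ q) (hpq : p + q ≤ N) : 0 < pngStage s X p q :=
  foldl_rhoMove_pos X _ _ _ (fun k hk => by simp at hk; omega) hX hp hq hpq

theorem diagProd_pngStage (i j : ℕ)
    (hX : ∀ p q, 1 ≤ p → 1 ≤ q → p + q ≤ i + j + 2 → 0 < X p q) :
    diagProd (pngStage (i + j + 1) X) (i + 1) (j + 1) * diagProd X i j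
      = X (i + 1) (j + 1) * diagProd X i (j + 1) * diagProd X (i + 1) j := by
  have hsplit : List.range (i + j + 1) = List.range j ++ j :: (List.range i).map (j + 1 + ·) := by
    rw [show i + j + 1 = j + 1 + i by ring, List.range_add, List.range_succ, List.append_assoc,
      List.singleton_append]
  set Z := (List.range j).foldl (fun Y k => rhoMove (i + j + 1 - k) (1 + k) Y) X
  -- The moves preceding `ρ^{i+1}_{j+1}` act on the diagonals `p - q = i + j - 2k > i - j + 1`.
  have hZ : ∀ p q, p + j < q + i + 2 → Z p q = X p q := fun p q hpq =>
    foldl_rhoMove_apply_of_not_mem_diag X _ _ _ fun k hk m hm => by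
      rw [List.mem_range] at hk; omega
  have hZpos : ∀ p q, 1 ≤ p → 1 ≤ q → p + q < i + j + 2 → 0 < Z p q := fun p q hp hq hpq =>
    foldl_rhoMove_pos X _ _ _ (fun k hk => by rw [List.mem_range] at hk; omega) hX hp hq hpq.le
  have hstage : pngStage (i + j + 1) X
      = ((List.range i).map (j + 1 + ·)).foldl (fun Y k => rhoMove (i + j + 1 - k) (1 + k) Y)
          (rhoMove (i + 1) (j + 1) Z) := by
    rw [pngStage, hsplit, List.foldl_append, List.foldl_cons, show i + j + 1 - j = i + 1 by omega,
      Nat.add_comm 1 j]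
  have hafter : diagProd (pngStage (i + j + 1) X) (i + 1) (j + 1)
      = diagProd (rhoMove (i + 1) (j + 1) Z) (i + 1) (j + 1) := by
    rw [hstage]
    exact diagProd_congr _ fun r hr => foldl_rhoMove_apply_of_not_mem_diag _ _ _ _
      fun k hk m hm => by simp only [List.mem_map, List.mem_range] at hk; omega
  have hZdiag : ∀ p q, p + j < q + i + 2 → diagProd Z p q = diagProd X p q := fun p q hpq =>
    diagProd_congr X fun r _ => hZ _ _ (by omega)
  rw [hafter, ← hZdiag i j (by omega), diagProd_rhoMove Z i j hZpos, hZ _ _ (by omega),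
    hZdiag i (j + 1) (by omega), hZdiag (i + 1) j (by omega)]

end Stage

section Dynamics

variable (W : ℕ → ℕ → ℝ)

lemma gPNG_succ (t : ℕ) : gPNG (t + 1) W = pngStage (t + 1) (gPNG t W) := by
  simp only [gPNG, List.range_succ, List.foldl_append, List.foldl_cons, List.foldl_nil]

lemma gPNG_apply_of_lt {t p q : ℕ} (h : t + 2 ≤ p + q) : gPNG t W p q = W p q := by
  induction t with
  | zero => rfl
  | succ t ih => rw [gPNG_succ, pngStage_apply_of_ne _ fun m => by omega, ih (by omega)]

lemma gPNG_pos {N t : ℕ} (ht : t < N) (hW : ∀ p q, 1 ≤ p → 1 ≤ q → p + q ≤ N → 0 < W p q)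
    {p q : ℕ} (hp : 1 ≤ p) (hq : 1 ≤ q) (hpq : p + q ≤ N) : 0 < gPNG t W p q := by
  induction t generalizing p q with
  | zero => exact hW p q hp hq hpq
  | succ t ih =>
    rw [gPNG_succ]
    exact pngStage_pos _ ht (fun a b ha hb hab => ih (by omega) ha hb hab) hp hq hpq

theorem diagProd_gPNG {t : ℕ} (hW : ∀ a b, 1 ≤ a → 1 ≤ b → a + b ≤ t + 1 → 0 < W a b)
    {p q : ℕ} (hpq : p + q = t + 1 ∨ p + q = t) : diagProd (gPNG t W) p q = rectProd W p q := by
  induction t generalizing p q with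
  | zero => rcases (by omega : p = 0 ∨ q = 0) with rfl | rfl <;> simp
  | succ t ih =>
    have ih' : ∀ {p q : ℕ}, p + q = t + 1 ∨ p + q = t → diagProd (gPNG t W) p q = rectProd W p q :=
      ih fun a b ha hb hab => hW a b ha hb (by omega)
    rw [gPNG_succ]
    rcases hpq with hpq | hpq
    · rcases p with _ | p
      · simp
      rcases q with _ | q
      · simp
      obtain rfl : t = p + q := by omega
      have hR : 0 < rectProd W p q :=
        rectProd_pos W fun a b ha hap hb hbq => hW a b ha hb (by omega)
      refine mul_right_cancel₀ hR.ne' ?_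
      calc diagProd (pngStage (p + q + 1) (gPNG (p + q) W)) (p + 1) (q + 1) * rectProd W p q
          = diagProd (pngStage (p + q + 1) (gPNG (p + q) W)) (p + 1) (q + 1)
              * diagProd (gPNG (p + q) W) p q := by rw [ih' (Or.inr rfl)]
        _ = gPNG (p + q) W (p + 1) (q + 1) * diagProd (gPNG (p + q) W) p (q + 1)
              * diagProd (gPNG (p + q) W) (p + 1) q :=
          diagProd_pngStage _ p q fun a b ha hb hab =>
            gPNG_pos W (t := p + q) (by omega) hW ha hb hab
        _ = W (p + 1) (q + 1) * rectProd W p (q + 1) * rectProd W (p + 1) q := by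
          rw [gPNG_apply_of_lt W (by omega), ih' (Or.inl (by omega)), ih' (Or.inl (by omega))]
        _ = rectProd W (p + 1) (q + 1) * rectProd W p q := (rectProd_succ_succ W p q).symm
    · rw [← ih' (Or.inl hpq)]
      exact diagProd_congr _ fun r _ => pngStage_apply_of_ne _ fun m => by omega

end Dynamics

theorem gPNG_type_general (n p q : ℕ)
    (hpq : p + q = n + 1 ∨ p + q = n) (W : ℕ → ℕ → ℝ)
    (hW : ∀ i j, 1 ≤ i → 1 ≤ j → i + j - 1 ≤ n → 0 < W i j) :
    ∏ r ∈ Finset.range (min p q), gPNG n W (p - r) (q - r)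
      = ∏ ij ∈ Finset.Icc 1 p ×ˢ Finset.Icc 1 q, W ij.1 ij.2 :=
  diagProd_gPNG W (fun a b ha hb hab => hW a b ha hb (by omega)) hpq

/-- Type preservation for geometric PNG: for a positive triangular array
`W = (w_{ij} : i+j-1 ≤ n)` and `H = gPNG(W)`, for every `(p,q)` with
`p + q = n + 1` or `p + q = n`, the product of the entries of `H` along the
north-west diagonal starting at `(p,q)` equals the product of all input entries
in the rectangle `[1,p] × [1,q]`. -/
theorem gPNG_type (n p q : ℕ) (hp : 1 ≤ p) (hq : 1 ≤ q)
    (hpq : p + q = n + 1 ∨ p + q = n) (W : ℕ → ℕ → ℝ)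
    (hW : ∀ i j, 1 ≤ i → 1 ≤ j → i + j - 1 ≤ n → 0 < W i j) :
    ∏ r ∈ Finset.range (min p q), gPNG n W (p - r) (q - r)
      = ∏ ij ∈ Finset.Icc 1 p ×ˢ Finset.Icc 1 q, W ij.1 ij.2 :=
  gPNG_type_general n p q hpq W hW
end
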